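/- arXiv:1012.2897 — 5 statements merged into one kernel-verified Lean document; each statement's English description precedes it below -/
import Mathlib

section
/- For M, M' ∈ sl₂(ℝ) (trace-zero 2×2 matrices), X, X' N×2 real matrices, and κ, κ' symmetric N×N real matrices, the matrix commutator of the (2N+2)×(2N+2) block matrices [[0, X, κ], [0, M, −J₂Xᵀ], [0, 0, 0]] and [[0, X', κ'], [0, M', −J₂X'ᵀ], [0, 0, 0]] equals the block matrix associated in the same way to the triple ([M, M'], X·M' − X'·M, X'·J₂·Xᵀ − X·J₂·X'ᵀ); in particular the last entry is again symmetric. -/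
open Matrix Complex

noncomputable section

def J2 : Matrix (Fin 2) (Fin 2) ℝ := !![0, -1; 1, 0]

/-- The Lie-algebra style block matrix `[[0, X, κ], [0, M, −J₂Xᵀ], [0, 0, 0]]`
with blocks of sizes N, 2, N. -/
def jPsi {N : ℕ} (M : Matrix (Fin 2) (Fin 2) ℝ) (X : Matrix (Fin N) (Fin 2) ℝ)
    (κ : Matrix (Fin N) (Fin N) ℝ) :
    Matrix (Fin N ⊕ (Fin 2 ⊕ Fin N)) (Fin N ⊕ (Fin 2 ⊕ Fin N)) ℝ :=
  fromBlocks 0 (fromCols X κ) 0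
    (fromBlocks M (-(J2 * X.transpose)) 0 0)

/-!
The κ-columns of `jPsi` meet only the zero bottom rows, so κ never enters the product
`jPsi M X κ * jPsi M' X' κ'`; the product is read off blockwise. The only non-formal step is
the `(2,3)` block, where `M J₂ + J₂ Mᵀ = (tr M) J₂` for 2×2 matrices turns
`M J₂ X'ᵀ − M' J₂ Xᵀ` into `J₂ (X M' − X' M)ᵀ` once the traces vanish. Symmetry of
`X' J₂ Xᵀ − X J₂ X'ᵀ` only uses that `J₂` is antisymmetric.
-/

namespace Matrix

variable {l m n o α : Type*}

theorem fromBlocks_sub [Sub α] (A A' : Matrix n l α) (B B' : Matrix n m α)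
    (C C' : Matrix o l α) (D D' : Matrix o m α) :
    fromBlocks A B C D - fromBlocks A' B' C' D' =
      fromBlocks (A - A') (B - B') (C - C') (D - D') := by
  ext (i | i) (j | j) <;> rfl

theorem fromCols_sub [Sub α] (A A' : Matrix n m α) (B B' : Matrix n l α) :
    fromCols A B - fromCols A' B' = fromCols (A - A') (B - B') := by
  ext i (j | j) <;> rfl

end Matrix

theorem J2_transpose : J2ᵀ = -J2 := by
  ext i j
  fin_cases i <;> fin_cases j <;> simp [J2]

theorem mul_J2_add_J2_mul_transpose (M : Matrix (Fin 2) (Fin 2) ℝ) :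
    M * J2 + J2 * Mᵀ = M.trace • J2 := by
  ext i j
  fin_cases i <;> fin_cases j <;>
    simp [J2, trace_fin_two, mul_apply, vecMul, dotProduct, Fin.sum_univ_two] <;> ring

theorem J2_mul_transpose_mul_of_trace_eq_zero {N : ℕ} {M : Matrix (Fin 2) (Fin 2) ℝ}
    (hM : M.trace = 0) (X : Matrix (Fin N) (Fin 2) ℝ) :
    J2 * (X * M)ᵀ = -(M * (J2 * Xᵀ)) := by
  have hJ : J2 * Mᵀ = -(M * J2) := by
    rw [eq_neg_iff_add_eq_zero, add_comm, mul_J2_add_J2_mul_transpose, hM, zero_smul]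
  rw [transpose_mul, ← Matrix.mul_assoc, hJ, Matrix.neg_mul, Matrix.mul_assoc]

theorem isSymm_mul_J2_mul_transpose_sub {N : ℕ} (X X' : Matrix (Fin N) (Fin 2) ℝ) :
    (X' * J2 * Xᵀ - X * J2 * X'ᵀ).IsSymm := by
  simp only [IsSymm, transpose_sub, transpose_mul, transpose_transpose, J2_transpose,
    Matrix.mul_neg, Matrix.neg_mul, Matrix.mul_assoc]
  abel

theorem jPsi_mul_jPsi {N : ℕ} (M M' : Matrix (Fin 2) (Fin 2) ℝ)
    (X X' : Matrix (Fin N) (Fin 2) ℝ) (κ κ' : Matrix (Fin N) (Fin N) ℝ) :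
    jPsi M X κ * jPsi M' X' κ' =
      fromBlocks 0 (fromCols (X * M') (-(X * (J2 * X'ᵀ)))) 0
        (fromBlocks (M * M') (-(M * (J2 * X'ᵀ))) 0 0) := by
  simp only [jPsi, fromBlocks_multiply, fromCols_mul_fromBlocks, Matrix.mul_zero,
    Matrix.zero_mul, add_zero, zero_add, neg_zero, Matrix.mul_neg]

theorem jPsi_bracket_general (N : ℕ) (M M' : Matrix (Fin 2) (Fin 2) ℝ)
    (X X' : Matrix (Fin N) (Fin 2) ℝ) (κ κ' : Matrix (Fin N) (Fin N) ℝ)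
    (hM : M.trace = 0) (hM' : M'.trace = 0) :
    jPsi M X κ * jPsi M' X' κ' - jPsi M' X' κ' * jPsi M X κ =
      jPsi (M * M' - M' * M) (X * M' - X' * M)
        (X' * J2 * X.transpose - X * J2 * X'.transpose) ∧
    (X' * J2 * X.transpose - X * J2 * X'.transpose).IsSymm := by
  refine ⟨?_, isSymm_mul_J2_mul_transpose_sub X X'⟩
  have hJ : -(J2 * (X * M' - X' * M)ᵀ) = -(M * (J2 * X'ᵀ)) - -(M' * (J2 * Xᵀ)) := by
    rw [transpose_sub, Matrix.mul_sub, J2_mul_transpose_mul_of_trace_eq_zero hM',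
      J2_mul_transpose_mul_of_trace_eq_zero hM]
    abel
  rw [jPsi_mul_jPsi, jPsi_mul_jPsi, jPsi, fromBlocks_sub, fromCols_sub, fromBlocks_sub, hJ]
  simp only [sub_zero, sub_neg_eq_add, neg_add_eq_sub, Matrix.mul_assoc]

/-- The matrix commutator of the block matrices associated to `(M, X, κ)` and `(M', X', κ')`
is the block matrix associated to `([M,M'], X·M' − X'·M, X'·J₂·Xᵀ − X·J₂·X'ᵀ)`; in particular
the last entry is again symmetric. -/
theorem jPsi_bracket (N : ℕ) (M M' : Matrix (Fin 2) (Fin 2) ℝ)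
    (X X' : Matrix (Fin N) (Fin 2) ℝ) (κ κ' : Matrix (Fin N) (Fin N) ℝ)
    (hM : M.trace = 0) (hM' : M'.trace = 0) (hκ : κ.IsSymm) (hκ' : κ'.IsSymm) :
    jPsi M X κ * jPsi M' X' κ' - jPsi M' X' κ' * jPsi M X κ =
      jPsi (M * M' - M' * M) (X * M' - X' * M)
        (X' * J2 * X.transpose - X * J2 * X'.transpose) ∧
    (X' * J2 * X.transpose - X * J2 * X'.transpose).IsSymm :=
  jPsi_bracket_general N M M' X X' κ κ' hM hM'
end
end

section
/- For M ∈ sl₂(ℝ), X an N×2 real matrix, and κ a symmetric N×N real matrix, the matrix exponential of the block matrix A = [[0, X, κ], [0, M, −J₂Xᵀ], [0, 0, 0]] equals the block matrix [[I_N, X·g(M), κ − X·h(M)·J₂·Xᵀ], [0, exp(M), −exp(M)·J₂·(X·g(M))ᵀ], [0, 0, I_N]], where g(M) := Σ_{n≥0} Mⁿ/(n+1)! and h(M) := Σ_{n≥0} Mⁿ/(n+2)!. -/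
/-!
Write `φ_k(A) = Σ_{n≥0} Aⁿ/(n+k)!`, so that `φ₀ = exp`, `φ₁ = g` and `φ₂ = h`. Since
`[[0, Y], [0, A]]^(n+1) = [[0, Y Aⁿ], [0, A^(n+1)]]` and `[[A, Y], [0, 0]]^(n+1) =
[[A^(n+1), Aⁿ Y], [0, 0]]`, applying `φ_k` to such a block matrix puts `φ_{k+1}(A)` in the
corner block. Two applications of this compute `exp (jPsi M X κ)`, with `g(M) (-J₂ Xᵀ)` in the
middle right block. This matches the claimed form since, for traceless `M`, `J₂ Mᵀ = -M J₂` gives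
`J₂ g(M)ᵀ = g(-M) J₂`, and `exp(M) g(-M) = g(M)`.
-/

open Matrix Complex

noncomputable section

/-- `g(M) := Σ_{n≥0} Mⁿ/(n+1)!`. -/
def gSeries (M : Matrix (Fin 2) (Fin 2) ℝ) : Matrix (Fin 2) (Fin 2) ℝ :=
  ∑' n : ℕ, (((n + 1).factorial : ℝ))⁻¹ • M ^ n

/-- `h(M) := Σ_{n≥0} Mⁿ/(n+2)!`. -/
def hSeries (M : Matrix (Fin 2) (Fin 2) ℝ) : Matrix (Fin 2) (Fin 2) ℝ :=
  ∑' n : ℕ, (((n + 2).factorial : ℝ))⁻¹ • M ^ n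

section BlockSums

variable {ι R l m n o : Type*} [TopologicalSpace R]

theorem HasSum.matrix_fromBlocks [AddCommMonoid R] {A : ι → Matrix n l R}
    {B : ι → Matrix n m R} {C : ι → Matrix o l R} {D : ι → Matrix o m R} {a : Matrix n l R}
    {b : Matrix n m R} {c : Matrix o l R} {d : Matrix o m R} (hA : HasSum A a) (hB : HasSum B b)
    (hC : HasSum C c) (hD : HasSum D d) :
    HasSum (fun i => fromBlocks (A i) (B i) (C i) (D i)) (fromBlocks a b c d) := by
  refine Pi.hasSum.mpr fun i => Pi.hasSum.mpr fun j => ?_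
  rcases i with i | i <;> rcases j with j | j
  · exact Pi.hasSum.mp (Pi.hasSum.mp hA i) j
  · exact Pi.hasSum.mp (Pi.hasSum.mp hB i) j
  · exact Pi.hasSum.mp (Pi.hasSum.mp hC i) j
  · exact Pi.hasSum.mp (Pi.hasSum.mp hD i) j

variable [Fintype m] [NonUnitalNonAssocSemiring R] [IsTopologicalSemiring R]

theorem HasSum.matrix_mul_left (Y : Matrix l m R) {f : ι → Matrix m n R} {a : Matrix m n R}
    (hf : HasSum f a) : HasSum (fun i => Y * f i) (Y * a) :=
  hf.map (mulLeftLinearMap n ℕ Y) (continuous_const.matrix_mul continuous_id)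

theorem HasSum.matrix_mul_right {f : ι → Matrix l m R} {a : Matrix l m R} (hf : HasSum f a)
    (Y : Matrix m n R) : HasSum (fun i => f i * Y) (a * Y) :=
  hf.map (mulRightLinearMap l ℕ Y) (continuous_id.matrix_mul continuous_const)

end BlockSums

section BlockPowers

variable {R m p : Type*} [Fintype m] [DecidableEq m] [Fintype p] [DecidableEq p] [Semiring R]

theorem fromBlocks_zero₁₁_pow_succ (Y : Matrix p m R) (A : Matrix m m R) (n : ℕ) :
    (fromBlocks 0 Y 0 A : Matrix (p ⊕ m) (p ⊕ m) R) ^ (n + 1) =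
      fromBlocks 0 (Y * A ^ n) 0 (A ^ (n + 1)) := by
  induction n with
  | zero => simp
  | succ n ih => rw [pow_succ, ih, fromBlocks_multiply]; simp [pow_succ, Matrix.mul_assoc]

theorem fromBlocks_zero₂₂_pow_succ (A : Matrix m m R) (Y : Matrix m p R) (n : ℕ) :
    (fromBlocks A Y 0 0 : Matrix (m ⊕ p) (m ⊕ p) R) ^ (n + 1) =
      fromBlocks (A ^ (n + 1)) (A ^ n * Y) 0 0 := by
  induction n with
  | zero => simp
  | succ n ih => rw [pow_succ', ih, fromBlocks_multiply]; simp [pow_succ', Matrix.mul_assoc]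

end BlockPowers

section ExpPhi

open NormedSpace

variable {m p : Type*} [Fintype m] [DecidableEq m] [Fintype p] [DecidableEq p]

def expPhi (k : ℕ) (A : Matrix m m ℝ) : Matrix m m ℝ :=
  ∑' n : ℕ, (((n + k).factorial : ℝ))⁻¹ • A ^ n

theorem hasSum_expPhi (k : ℕ) (A : Matrix m m ℝ) :
    HasSum (fun n : ℕ => (((n + k).factorial : ℝ))⁻¹ • A ^ n) (expPhi k A) := by
  let : NormedRing (Matrix m m ℝ) := Matrix.linftyOpNormedRing
  let : NormedAlgebra ℝ (Matrix m m ℝ) := Matrix.linftyOpNormedAlgebra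
  refine Summable.hasSum <| Summable.of_norm_bounded (norm_expSeries_summable' (𝕂 := ℝ) A)
    fun n => ?_
  rw [norm_smul, norm_smul, Real.norm_of_nonneg (by positivity),
    Real.norm_of_nonneg (by positivity)]
  gcongr
  exact Nat.le_add_right n k

theorem expPhi_zero (A : Matrix m m ℝ) : expPhi 0 A = exp A := by
  simp [expPhi, exp_eq_tsum ℝ]

theorem hasSum_expPhi_succ (k : ℕ) (A : Matrix m m ℝ) :
    HasSum (fun n : ℕ => (((n + 1 + k).factorial : ℝ))⁻¹ • A ^ (n + 1))
      (expPhi k A - ((k.factorial : ℝ))⁻¹ • 1) := by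
  simpa using (hasSum_nat_add_iff' (f := fun n => (((n + k).factorial : ℝ))⁻¹ • A ^ n) 1).mpr
    (hasSum_expPhi k A)

theorem expPhi_eq_of_hasSum_succ {k : ℕ} {B S : Matrix m m ℝ}
    (h : HasSum (fun n : ℕ => (((n + 1 + k).factorial : ℝ))⁻¹ • B ^ (n + 1)) S) :
    expPhi k B = ((k.factorial : ℝ))⁻¹ • 1 + S := by
  have := (hasSum_nat_add_iff (f := fun n => (((n + k).factorial : ℝ))⁻¹ • B ^ n) 1).mp h
  simpa [add_comm] using (hasSum_expPhi k B).unique this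

theorem expPhi_fromBlocks_zero₁₁ (k : ℕ) (Y : Matrix p m ℝ) (A : Matrix m m ℝ) :
    expPhi k (fromBlocks 0 Y 0 A) =
      fromBlocks (((k.factorial : ℝ))⁻¹ • 1) (Y * expPhi (k + 1) A) 0 (expPhi k A) := by
  have hY : HasSum (fun n : ℕ => (((n + 1 + k).factorial : ℝ))⁻¹ • (Y * A ^ n))
      (Y * expPhi (k + 1) A) := by
    simpa [Matrix.mul_smul, Nat.add_right_comm _ 1 k, add_assoc] using
      (hasSum_expPhi (k + 1) A).matrix_mul_left Y
  rw [expPhi_eq_of_hasSum_succ (S := fromBlocks 0 (Y * expPhi (k + 1) A) 0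
    (expPhi k A - ((k.factorial : ℝ))⁻¹ • 1))]
  · rw [← fromBlocks_one, fromBlocks_smul, fromBlocks_add]
    simp
  · simpa [fromBlocks_zero₁₁_pow_succ, fromBlocks_smul] using
      hasSum_zero.matrix_fromBlocks hY hasSum_zero (hasSum_expPhi_succ k A)

theorem expPhi_fromBlocks_zero₂₂ (k : ℕ) (A : Matrix m m ℝ) (Y : Matrix m p ℝ) :
    expPhi k (fromBlocks A Y 0 0) =
      fromBlocks (expPhi k A) (expPhi (k + 1) A * Y) 0 (((k.factorial : ℝ))⁻¹ • 1) := by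
  have hY : HasSum (fun n : ℕ => (((n + 1 + k).factorial : ℝ))⁻¹ • (A ^ n * Y))
      (expPhi (k + 1) A * Y) := by
    simpa [Matrix.smul_mul, Nat.add_right_comm _ 1 k, add_assoc] using
      (hasSum_expPhi (k + 1) A).matrix_mul_right Y
  rw [expPhi_eq_of_hasSum_succ (S := fromBlocks (expPhi k A - ((k.factorial : ℝ))⁻¹ • 1)
    (expPhi (k + 1) A * Y) 0 0)]
  · rw [← fromBlocks_one, fromBlocks_smul, fromBlocks_add]
    simp
  · simpa [fromBlocks_zero₂₂_pow_succ, fromBlocks_smul] using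
      (hasSum_expPhi_succ k A).matrix_fromBlocks hY hasSum_zero hasSum_zero

theorem expPhi_fromBlocks_diagonal (k : ℕ) (A : Matrix m m ℝ) (D : Matrix p p ℝ) :
    expPhi k (fromBlocks A 0 0 D) = fromBlocks (expPhi k A) 0 0 (expPhi k D) := by
  refine (hasSum_expPhi k _).unique ?_
  simpa [fromBlocks_diagonal_pow, fromBlocks_smul] using
    (hasSum_expPhi k A).matrix_fromBlocks hasSum_zero hasSum_zero (hasSum_expPhi k D)

theorem exp_fromBlocks_zero₁₁ (Y : Matrix p m ℝ) (A : Matrix m m ℝ) :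
    exp (fromBlocks 0 Y 0 A : Matrix (p ⊕ m) (p ⊕ m) ℝ) =
      fromBlocks 1 (Y * expPhi 1 A) 0 (exp A) := by
  simpa [expPhi_zero] using expPhi_fromBlocks_zero₁₁ 0 Y A

theorem exp_fromBlocks_zero₂₂ (A : Matrix m m ℝ) (Y : Matrix m p ℝ) :
    exp (fromBlocks A Y 0 0 : Matrix (m ⊕ p) (m ⊕ p) ℝ) =
      fromBlocks (exp A) (expPhi 1 A * Y) 0 1 := by
  simpa [expPhi_zero] using expPhi_fromBlocks_zero₂₂ 0 A Y

theorem exp_fromBlocks_diagonal (A : Matrix m m ℝ) (D : Matrix p p ℝ) :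
    exp (fromBlocks A 0 0 D) = fromBlocks (exp A) 0 0 (exp D) := by
  simpa [expPhi_zero] using expPhi_fromBlocks_diagonal 0 A D

/-- The functional equation `e^z (1 - e^{-z}) / z = (e^z - 1) / z`, obtained by splitting
`[[A, 1], [0, 0]] = [[A, 0], [0, A]] + [[0, 1], [0, -A]]` into commuting summands. -/
theorem exp_mul_expPhi_one_neg (A : Matrix m m ℝ) : exp A * expPhi 1 (-A) = expPhi 1 A := by
  have hsplit : (fromBlocks A 1 0 0 : Matrix (m ⊕ m) (m ⊕ m) ℝ) =
      fromBlocks A 0 0 A + fromBlocks 0 1 0 (-A) := by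
    simp [fromBlocks_add]
  have hcomm : Commute (fromBlocks A 0 0 A : Matrix (m ⊕ m) (m ⊕ m) ℝ)
      (fromBlocks 0 1 0 (-A)) := by
    simp [Commute, SemiconjBy, fromBlocks_multiply]
  have h := congrArg toBlocks₁₂ (exp_fromBlocks_zero₂₂ A (1 : Matrix m m ℝ))
  rw [hsplit, Matrix.exp_add_of_commute _ _ hcomm, exp_fromBlocks_diagonal,
    exp_fromBlocks_zero₁₁, fromBlocks_multiply] at h
  simpa using h

theorem expPhi_transpose (k : ℕ) (A : Matrix m m ℝ) : (expPhi k A)ᵀ = expPhi k Aᵀ :=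
  ((hasSum_expPhi k A).matrix_transpose.unique (by
    simpa [transpose_pow] using hasSum_expPhi k Aᵀ))

theorem SemiconjBy.expPhi {J A B : Matrix m m ℝ} (h : SemiconjBy J A B) (k : ℕ) :
    SemiconjBy J (expPhi k A) (expPhi k B) :=
  ((hasSum_expPhi k A).matrix_mul_left J).unique (by
    simpa [Matrix.mul_smul, Matrix.smul_mul, (h.pow_right _).eq] using
      (hasSum_expPhi k B).matrix_mul_right J)

end ExpPhi

/-- For `2 × 2` matrices `J₂ Mᵀ J₂⁻¹ = adj M = (tr M) • 1 - M`. -/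
theorem semiconjBy_J2_transpose_neg {M : Matrix (Fin 2) (Fin 2) ℝ} (hM : M.trace = 0) :
    SemiconjBy J2 Mᵀ (-M) := by
  have h11 : M 1 1 = -M 0 0 := by
    rw [trace_fin_two] at hM
    linarith
  ext i j
  fin_cases i <;> fin_cases j <;> simp [J2, Matrix.mul_apply, Fin.sum_univ_two, h11]

theorem exp_mul_J2_mul_expPhi_one_transpose {M : Matrix (Fin 2) (Fin 2) ℝ} (hM : M.trace = 0) :
    NormedSpace.exp M * J2 * (expPhi 1 M)ᵀ = expPhi 1 M * J2 := by
  rw [Matrix.mul_assoc, expPhi_transpose, ((semiconjBy_J2_transpose_neg hM).expPhi 1).eq,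
    ← Matrix.mul_assoc, exp_mul_expPhi_one_neg]

theorem exp_jPsi_general (N : ℕ) (M : Matrix (Fin 2) (Fin 2) ℝ) (X : Matrix (Fin N) (Fin 2) ℝ)
    (κ : Matrix (Fin N) (Fin N) ℝ) (hM : M.trace = 0) :
    NormedSpace.exp (jPsi M X κ) =
      fromBlocks 1 (fromCols (X * gSeries M) (κ - X * hSeries M * J2 * X.transpose)) 0
        (fromBlocks (NormedSpace.exp M)
          (-(NormedSpace.exp M * J2 * (X * gSeries M).transpose)) 0 1) := by
  have hg : gSeries M = expPhi 1 M := rfl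
  have hh : hSeries M = expPhi 2 M := rfl
  rw [jPsi, exp_fromBlocks_zero₁₁, exp_fromBlocks_zero₂₂, expPhi_fromBlocks_zero₂₂,
    fromCols_mul_fromBlocks, hg, hh, transpose_mul, ← Matrix.mul_assoc (NormedSpace.exp M * J2),
    exp_mul_J2_mul_expPhi_one_transpose hM]
  simp [Matrix.mul_assoc, sub_eq_neg_add]

/-- The matrix exponential of `[[0, X, κ], [0, M, −J₂Xᵀ], [0, 0, 0]]` equals
`[[I_N, X·g(M), κ − X·h(M)·J₂·Xᵀ], [0, exp(M), −exp(M)·J₂·(X·g(M))ᵀ], [0, 0, I_N]]`. -/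
theorem exp_jPsi (N : ℕ) (M : Matrix (Fin 2) (Fin 2) ℝ) (X : Matrix (Fin N) (Fin 2) ℝ)
    (κ : Matrix (Fin N) (Fin N) ℝ) (hM : M.trace = 0) (hκ : κ.IsSymm) :
    NormedSpace.exp (jPsi M X κ) =
      fromBlocks 1 (fromCols (X * gSeries M) (κ - X * hSeries M * J2 * X.transpose)) 0
        (fromBlocks (NormedSpace.exp M)
          (-(NormedSpace.exp M * J2 * (X * gSeries M).transpose)) 0 1) :=
  exp_jPsi_general N M X κ hM
end
end

section
/- For every k ∈ ℤ and every complex symmetric N×N matrix L, the function β^k·α_L is a scalar cocycle for the action of G̃^J_N on ℍ_{1,N}: for all g, g' ∈ G̃^J_N and all (τ,z) ∈ ℍ_{1,N}, β(MM'', τ)^k·α_L(g·g', (τ,z)) = β(M, g'·τ-component)^k·α_L(g, g'·(τ,z)) · β(M', τ)^k·α_L(g', (τ,z)), where M, M' are the SL₂(ℝ)-components of g, g' and MM'' that of g·g'. Equivalently, the slash action satisfies (f|_{k,L}[g])|_{k,L}[g'] = f|_{k,L}[g·g'] for all functions f on ℍ_{1,N}. -/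
/-! `β` is the usual automorphy factor of `SL₂(ℝ)` and `α_L` is the exponential of a linear
function of `a`, so everything reduces to the additive cocycle identity
`a(gg', p) = a(g, g'p) + a(g', p)`. The terms quadratic in `w := z + X₁τ + X₂` match thanks to
`c''β(MM',τ) = cβ(M,M'τ)β(M',τ)² + c'β(M',τ)`, the derivative in `τ` of the cocycle identity for
the denominators `cτ + d`; what is left is a polynomial identity that holds modulo `det M' = 1`. -/

open Matrix Complex

noncomputable section

/-- An element of the (centrally extended) Jacobi group data: a triple (M, X, κ). -/
structure JTriple (N : ℕ) where
  M : Matrix (Fin 2) (Fin 2) ℝ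
  X : Matrix (Fin N) (Fin 2) ℝ
  κ : Matrix (Fin N) (Fin N) ℝ

/-- Membership in the centrally extended real Jacobi group `G̃^J_N`. -/
def JTriple.IsMem {N : ℕ} (g : JTriple N) : Prop :=
  g.M.det = 1 ∧ (g.κ + (2⁻¹ : ℝ) • (g.X * J2 * g.X.transpose)).IsSymm

/-- The group law of `G̃^J_N`. -/
def JTriple.mul {N : ℕ} (g g' : JTriple N) : JTriple N :=
  ⟨g.M * g'.M, g.X * g'.M + g'.X, g.κ + g'.κ - g.X * g'.M * J2 * g'.X.transpose⟩

/-- The Möbius action `Mτ := (aτ+b)/(cτ+d)`. -/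
def mAct (M : Matrix (Fin 2) (Fin 2) ℝ) (τ : ℂ) : ℂ :=
  ((M 0 0 : ℝ) * τ + (M 0 1 : ℝ)) / ((M 1 0 : ℝ) * τ + (M 1 1 : ℝ))

/-- The cocycle `β(M,τ) := (cτ+d)⁻¹`. -/
def betaC (M : Matrix (Fin 2) (Fin 2) ℝ) (τ : ℂ) : ℂ :=
  (((M 1 0 : ℝ) : ℂ) * τ + ((M 1 1 : ℝ) : ℂ))⁻¹

/-- First column of `X`, as a complex vector. -/
def col1 {N : ℕ} (X : Matrix (Fin N) (Fin 2) ℝ) : Fin N → ℂ := fun i => (X i 0 : ℂ)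

/-- Second column of `X`, as a complex vector. -/
def col2 {N : ℕ} (X : Matrix (Fin N) (Fin 2) ℝ) : Fin N → ℂ := fun i => (X i 1 : ℂ)

/-- The action of `G̃^J_N` on `ℍ_{1,N} ⊆ ℂ × ℂ^N`:
`(M,X,κ)·(τ,z) := (Mτ, β(M,τ)(z + X₁τ + X₂))`. -/
def jAct {N : ℕ} (g : JTriple N) (p : ℂ × (Fin N → ℂ)) : ℂ × (Fin N → ℂ) :=
  (mAct g.M p.1, betaC g.M p.1 • (p.2 + p.1 • col1 g.X + col2 g.X))

/-- The matrix-valued function `a(g, (τ,z))`. -/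
def aFun {N : ℕ} (g : JTriple N) (p : ℂ × (Fin N → ℂ)) : Matrix (Fin N) (Fin N) ℂ :=
  g.κ.map (fun t => (t : ℂ))
    + vecMulVec (col2 g.X) (col1 g.X) + vecMulVec (col1 g.X) p.2 + vecMulVec p.2 (col1 g.X)
    + p.1 • vecMulVec (col1 g.X) (col1 g.X)
    - (((g.M 1 0 : ℝ) : ℂ) * betaC g.M p.1) •
        vecMulVec (p.2 + p.1 • col1 g.X + col2 g.X) (p.2 + p.1 • col1 g.X + col2 g.X)

/-- The scalar cocycle `α_L(g,(τ,z)) := e^{2πi·tr(L·a(g,(τ,z)))}`. -/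
def alphaL {N : ℕ} (L : Matrix (Fin N) (Fin N) ℂ) (g : JTriple N)
    (p : ℂ × (Fin N → ℂ)) : ℂ :=
  Complex.exp (2 * Real.pi * Complex.I * (L * aFun g p).trace)

/-- The slash action `(f|_{k,L}[g])(τ,z) := β(M,τ)^k·α_L(g,(τ,z))·f(g·(τ,z))`. -/
def jSlash {N : ℕ} (k : ℤ) (L : Matrix (Fin N) (Fin N) ℂ)
    (f : ℂ × (Fin N → ℂ) → ℂ) (g : JTriple N) : ℂ × (Fin N → ℂ) → ℂ :=
  fun p => betaC g.M p.1 ^ k * alphaL L g p * f (jAct g p)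

def num (M : Matrix (Fin 2) (Fin 2) ℝ) (τ : ℂ) : ℂ := (M 0 0 : ℂ) * τ + (M 0 1 : ℂ)

def denom (M : Matrix (Fin 2) (Fin 2) ℝ) (τ : ℂ) : ℂ := (M 1 0 : ℂ) * τ + (M 1 1 : ℂ)

theorem mAct_eq_div (M : Matrix (Fin 2) (Fin 2) ℝ) (τ : ℂ) : mAct M τ = num M τ / denom M τ :=
  rfl

theorem betaC_eq_inv (M : Matrix (Fin 2) (Fin 2) ℝ) (τ : ℂ) : betaC M τ = (denom M τ)⁻¹ := rfl

theorem denom_ne_zero {M : Matrix (Fin 2) (Fin 2) ℝ} (hM : M.det ≠ 0) {τ : ℂ} (hτ : 0 < τ.im) :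
    denom M τ ≠ 0 := by
  intro h
  have hc : M 1 0 = 0 := by simpa [denom, hτ.ne'] using congrArg Complex.im h
  have hd : M 1 1 = 0 := by simpa [denom, hc] using congrArg Complex.re h
  exact hM (by simp [Matrix.det_fin_two, hc, hd])

section Moebius

variable {M M' : Matrix (Fin 2) (Fin 2) ℝ} {τ : ℂ}

theorem det_eq_one_cast (hdet : M.det = 1) : (M 0 0 : ℂ) * M 1 1 - M 0 1 * M 1 0 = 1 := by
  rw [Matrix.det_fin_two] at hdet
  exact_mod_cast hdet

theorem num_mul (hM' : denom M' τ ≠ 0) :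
    num (M * M') τ = num M (mAct M' τ) * denom M' τ := by
  rw [num.eq_def M, add_mul, mul_assoc, mAct_eq_div, div_mul_cancel₀ _ hM']
  simp only [num, denom, Matrix.mul_apply, Fin.sum_univ_two]
  push_cast
  ring

theorem denom_mul (hM' : denom M' τ ≠ 0) :
    denom (M * M') τ = denom M (mAct M' τ) * denom M' τ := by
  rw [denom.eq_def M, add_mul, mul_assoc, mAct_eq_div, div_mul_cancel₀ _ hM']
  simp only [num, denom, Matrix.mul_apply, Fin.sum_univ_two]
  push_cast
  ring

theorem mAct_mul (hM' : denom M' τ ≠ 0) : mAct (M * M') τ = mAct M (mAct M' τ) := by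
  rw [mAct_eq_div, num_mul hM', denom_mul hM', mul_div_mul_right _ _ hM', ← mAct_eq_div]

theorem betaC_mul (hM' : denom M' τ ≠ 0) :
    betaC (M * M') τ = betaC M (mAct M' τ) * betaC M' τ := by
  rw [betaC_eq_inv, betaC_eq_inv, betaC_eq_inv, denom_mul hM', mul_inv]

theorem lowerLeft_mul_mul_denom (hdet : M'.det = 1) :
    ((M * M') 1 0 : ℂ) * denom M' τ = M' 1 0 * denom (M * M') τ + M 1 0 := by
  simp only [denom, Matrix.mul_apply, Fin.sum_univ_two]
  push_cast
  linear_combination (M 1 0 : ℂ) * det_eq_one_cast hdet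

theorem lowerLeft_mul_mul_betaC (hdet : M'.det = 1) (hM' : denom M' τ ≠ 0)
    (hM : denom M (mAct M' τ) ≠ 0) :
    ((M * M') 1 0 : ℂ) * betaC (M * M') τ
      = M 1 0 * betaC M (mAct M' τ) * betaC M' τ ^ 2 + M' 1 0 * betaC M' τ := by
  have key := lowerLeft_mul_mul_denom (M := M) (τ := τ) hdet
  rw [denom_mul hM'] at key
  rw [betaC_eq_inv, betaC_eq_inv, betaC_eq_inv, denom_mul hM']
  field_simp
  linear_combination key

end Moebius

section Jacobi

variable {N : ℕ} (g g' : JTriple N) (p : ℂ × (Fin N → ℂ))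

def shiftedZ : Fin N → ℂ := p.2 + p.1 • col1 g.X + col2 g.X

theorem JTriple.mul_M : (g.mul g').M = g.M * g'.M := rfl

theorem jAct_eq : jAct g p = (mAct g.M p.1, betaC g.M p.1 • shiftedZ g p) := rfl

theorem aFun_apply (i j : Fin N) :
    aFun g p i j = g.κ i j + g.X i 1 * g.X j 0 + g.X i 0 * p.2 j + p.2 i * g.X j 0
      + p.1 * (g.X i 0 * g.X j 0)
      - g.M 1 0 * betaC g.M p.1 * (shiftedZ g p i * shiftedZ g p j) := by
  simp [aFun, shiftedZ, col1, col2, Matrix.vecMulVec_apply]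

theorem shiftedZ_mul : shiftedZ (g.mul g') p
    = shiftedZ g' p + num g'.M p.1 • col1 g.X + denom g'.M p.1 • col2 g.X := by
  ext i
  simp only [shiftedZ, JTriple.mul, num, denom, col1, col2, Pi.add_apply, Pi.smul_apply,
    smul_eq_mul, Matrix.add_apply, Matrix.mul_apply, Fin.sum_univ_two]
  push_cast
  ring

variable {g g' p}

theorem shiftedZ_jAct (hg' : denom g'.M p.1 ≠ 0) :
    shiftedZ g (jAct g' p) = betaC g'.M p.1 • shiftedZ (g.mul g') p := by
  rw [shiftedZ_mul, shiftedZ, jAct_eq, mAct_eq_div, betaC_eq_inv]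
  ext i
  simp only [Pi.add_apply, Pi.smul_apply, smul_eq_mul]
  field_simp

theorem jAct_mul (hg' : denom g'.M p.1 ≠ 0) : jAct (g.mul g') p = jAct g (jAct g' p) := by
  rw [jAct_eq, jAct_eq g, shiftedZ_jAct hg', smul_smul, JTriple.mul_M, mAct_mul hg',
    betaC_mul hg']
  rfl

theorem aFun_mul (hdet : g'.M.det = 1) (hg' : denom g'.M p.1 ≠ 0)
    (hg : denom g.M (mAct g'.M p.1) ≠ 0) :
    aFun (g.mul g') p = aFun g (jAct g' p) + aFun g' p := by
  ext i j
  rw [Matrix.add_apply, aFun_apply, aFun_apply, aFun_apply, shiftedZ_jAct hg', JTriple.mul_M,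
    lowerLeft_mul_mul_betaC hdet hg' hg]
  simp only [jAct_eq, shiftedZ_mul, mAct_eq_div, betaC_eq_inv, Pi.smul_apply, Pi.add_apply,
    smul_eq_mul]
  simp only [shiftedZ, JTriple.mul, num, denom, col1, col2, J2, Pi.add_apply, Pi.smul_apply,
    smul_eq_mul, Matrix.add_apply, Matrix.sub_apply, Matrix.mul_apply, Fin.sum_univ_two,
    Matrix.transpose_apply, Matrix.of_apply, Matrix.cons_val', Matrix.cons_val_zero,
    Matrix.cons_val_one, Matrix.cons_val_fin_one, Matrix.empty_val'] at hg' ⊢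
  push_cast
  field_simp
  -- the residual is `(det M' - 1) (X₁ᵢ wⱼ + Wᵢ X₁ⱼ)`,
  -- where `w = shiftedZ g' p` and `W = shiftedZ (g.mul g') p`
  linear_combination ((g.X i 0 : ℂ) * (p.2 j + p.1 * g'.X j 0 + g'.X j 1)
    + (p.2 i + p.1 * g'.X i 0 + g'.X i 1 + (g'.M 0 0 * p.1 + g'.M 0 1) * g.X i 0
      + (g'.M 1 0 * p.1 + g'.M 1 1) * g.X i 1) * g.X j 0) * det_eq_one_cast hdet

theorem alphaL_mul (L : Matrix (Fin N) (Fin N) ℂ) (hdet : g'.M.det = 1)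
    (hg' : denom g'.M p.1 ≠ 0) (hg : denom g.M (mAct g'.M p.1) ≠ 0) :
    alphaL L (g.mul g') p = alphaL L g (jAct g' p) * alphaL L g' p := by
  rw [alphaL, alphaL, alphaL, ← Complex.exp_add, aFun_mul hdet hg' hg, Matrix.mul_add,
    Matrix.trace_add, mul_add]

end Jacobi

theorem betaAlpha_cocycle_general (N : ℕ) (k : ℤ) (L : Matrix (Fin N) (Fin N) ℂ)
    (g g' : JTriple N) (hg : g.IsMem) (hg' : g'.IsMem)
    (p : ℂ × (Fin N → ℂ)) (hp : 0 < p.1.im) :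
    betaC (g.mul g').M p.1 ^ k * alphaL L (g.mul g') p =
      (betaC g.M (jAct g' p).1 ^ k * alphaL L g (jAct g' p)) *
        (betaC g'.M p.1 ^ k * alphaL L g' p) ∧
    ∀ f : ℂ × (Fin N → ℂ) → ℂ, jSlash k L (jSlash k L f g) g' p = jSlash k L f (g.mul g') p := by
  have hdet_mul : (g.M * g'.M).det = 1 := by rw [Matrix.det_mul, hg.1, hg'.1, one_mul]
  have hJ' : denom g'.M p.1 ≠ 0 := denom_ne_zero (by rw [hg'.1]; exact one_ne_zero) hp
  have hJ : denom g.M (mAct g'.M p.1) ≠ 0 := by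
    have h := denom_ne_zero (by rw [hdet_mul]; exact one_ne_zero) hp
    rw [denom_mul hJ'] at h
    exact left_ne_zero_of_mul h
  have hβ : betaC (g.mul g').M p.1 ^ k = betaC g.M (jAct g' p).1 ^ k * betaC g'.M p.1 ^ k := by
    rw [JTriple.mul_M, betaC_mul hJ', mul_zpow]
    rfl
  have hα := alphaL_mul L hg'.1 hJ' hJ
  refine ⟨by rw [hβ, hα]; ring, fun f => ?_⟩
  simp only [jSlash]
  rw [← jAct_mul hJ', hβ, hα]
  ring

/-- For every `k ∈ ℤ` and complex symmetric `L`, the function `β^k·α_L` is a scalar cocycle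
for the action of `G̃^J_N` on `ℍ_{1,N}`; equivalently `(f|_{k,L}[g])|_{k,L}[g'] = f|_{k,L}[g·g']`. -/
theorem betaAlpha_cocycle (N : ℕ) (hN : 1 ≤ N) (k : ℤ) (L : Matrix (Fin N) (Fin N) ℂ)
    (hL : L.IsSymm) (g g' : JTriple N) (hg : g.IsMem) (hg' : g'.IsMem)
    (p : ℂ × (Fin N → ℂ)) (hp : 0 < p.1.im) :
    betaC (g.mul g').M p.1 ^ k * alphaL L (g.mul g') p =
      (betaC g.M (jAct g' p).1 ^ k * alphaL L g (jAct g' p)) *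
        (betaC g'.M p.1 ^ k * alphaL L g' p) ∧
    ∀ f : ℂ × (Fin N → ℂ) → ℂ, jSlash k L (jSlash k L f g) g' p = jSlash k L f (g.mul g') p :=
  betaAlpha_cocycle_general N k L g g' hg hg' p hp
end
end

section
/- The vector operators Y₊ and Y₋ are componentwise covariant differential operators of order 1: for every smooth function f on ℍ_{1,N}, every g ∈ G̃^J_N, every k ∈ ℤ, every complex symmetric N×N matrix L, and every j ∈ {1,…,N}, Y₊,ⱼ(f|_{k,L}[g]) = (Y₊,ⱼ f)|_{k+1,L}[g] and Y₋,ⱼ(f|_{k,L}[g]) = (Y₋,ⱼ f)|_{k-1,L}[g]. -/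
open Matrix Complex

noncomputable section

/-- The Wirtinger derivative `∂_τ = ½(∂_x − i∂_y)` for functions on `ℂ × ℂ^N`. -/
def dTau {N : ℕ} (f : ℂ × (Fin N → ℂ) → ℂ) (p : ℂ × (Fin N → ℂ)) : ℂ :=
  (2⁻¹ : ℂ) * (fderiv ℝ f p (1, 0) - Complex.I * fderiv ℝ f p (Complex.I, 0))

/-- The Wirtinger derivative `∂_τ̄ = ½(∂_x + i∂_y)`. -/
def dTauBar {N : ℕ} (f : ℂ × (Fin N → ℂ) → ℂ) (p : ℂ × (Fin N → ℂ)) : ℂ :=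
  (2⁻¹ : ℂ) * (fderiv ℝ f p (1, 0) + Complex.I * fderiv ℝ f p (Complex.I, 0))

/-- The Wirtinger derivative `∂_{z_j} = ½(∂_{u_j} − i∂_{v_j})`. -/
def dZ {N : ℕ} (j : Fin N) (f : ℂ × (Fin N → ℂ) → ℂ) (p : ℂ × (Fin N → ℂ)) : ℂ :=
  (2⁻¹ : ℂ) * (fderiv ℝ f p (0, Pi.single j 1) -
    Complex.I * fderiv ℝ f p (0, Pi.single j Complex.I))

/-- The Wirtinger derivative `∂_{z̄_j} = ½(∂_{u_j} + i∂_{v_j})`. -/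
def dZBar {N : ℕ} (j : Fin N) (f : ℂ × (Fin N → ℂ) → ℂ) (p : ℂ × (Fin N → ℂ)) : ℂ :=
  (2⁻¹ : ℂ) * (fderiv ℝ f p (0, Pi.single j 1) +
    Complex.I * fderiv ℝ f p (0, Pi.single j Complex.I))

/-- `y = Im τ` as a complex number. -/
def yC {N : ℕ} (p : ℂ × (Fin N → ℂ)) : ℂ := (p.1.im : ℝ)

/-- `v_j = Im z_j` as a complex number. -/
def vC {N : ℕ} (p : ℂ × (Fin N → ℂ)) (j : Fin N) : ℂ := ((p.2 j).im : ℝ)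

/-- `𝔏 := 2πi·L`. -/
def Lfrak {N : ℕ} (L : Matrix (Fin N) (Fin N) ℂ) : Matrix (Fin N) (Fin N) ℂ :=
  (2 * (Real.pi : ℂ) * Complex.I) • L

/-- The lowering operator `X₋ := −2iy(y∂_τ̄ + vᵀ∂_z̄)`. -/
def opXm {N : ℕ} (f : ℂ × (Fin N → ℂ) → ℂ) (p : ℂ × (Fin N → ℂ)) : ℂ :=
  -2 * Complex.I * yC p * (yC p * dTauBar f p + ∑ j, vC p j * dZBar j f p)

/-- The raising operator `X₊^{k} := 2i(∂_τ + y⁻¹vᵀ∂_z + y⁻²𝔏[v]) + k·y⁻¹`. -/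
def opXp {N : ℕ} (L : Matrix (Fin N) (Fin N) ℂ) (k : ℤ)
    (f : ℂ × (Fin N → ℂ) → ℂ) (p : ℂ × (Fin N → ℂ)) : ℂ :=
  2 * Complex.I * (dTau f p + (yC p)⁻¹ * ∑ j, vC p j * dZ j f p
      + ((yC p)⁻¹) ^ 2 * (∑ i, ∑ j, vC p i * Lfrak L i j * vC p j) * f p)
    + (k : ℂ) * (yC p)⁻¹ * f p

/-- The lowering operator `Y₋,ⱼ := −iy∂_{z̄ⱼ}`. -/
def opYm {N : ℕ} (j : Fin N) (f : ℂ × (Fin N → ℂ) → ℂ) (p : ℂ × (Fin N → ℂ)) : ℂ :=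
  -Complex.I * yC p * dZBar j f p

/-- The raising operator `Y₊,ⱼ := i∂_{zⱼ} + 2iy⁻¹(𝔏v)ⱼ`. -/
def opYp {N : ℕ} (L : Matrix (Fin N) (Fin N) ℂ) (j : Fin N)
    (f : ℂ × (Fin N → ℂ) → ℂ) (p : ℂ × (Fin N → ℂ)) : ℂ :=
  Complex.I * dZ j f p + 2 * Complex.I * (yC p)⁻¹ * (∑ l, Lfrak L j l * vC p l) * f p

/-!
Both operators only differentiate in `z`, and in the `z`-directions the slash is simple:
`β(M,τ)` is constant, `g·(τ,z)` moves affinely with linear part `β(M,τ)`, and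
`tr(L·a(g,(τ,z)))` is a quadratic polynomial in `z` whose gradient is `2L(X₁ − cβW)`,
`W = z + X₁τ + X₂`, for symmetric `L`. So `α_L` is holomorphic in `z`, and the chain rule gives
`∂_{z̄}(f|g) = β^k α β̄ (∂_{z̄} f)∘g` and
`∂_z(f|g) = β^k α (4πi (L(X₁ − cβW))_j f∘g + β (∂_z f)∘g)`.
Since `Im(Mτ) = y|β|²`, the first is the `Y₋` law. In the second, the `y⁻¹𝔏v` part of `Y₊`
absorbs the derivative of `α_L` through the identity `X₁ − cβW + v/y = β v'/y'`, where
`(τ', z') = g·(τ,z)` with `y' = Im τ'` and `v' = Im z'`.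
-/

open ComplexConjugate

theorem clm_apply_eq_re_mul_add_im_mul (φ : ℂ →L[ℝ] ℂ) (w : ℂ) :
    φ w = w.re * φ 1 + w.im * φ I := by
  calc φ w = φ (w.re • 1 + w.im • I) := by simp [Complex.real_smul, Complex.re_add_im]
    _ = w.re * φ 1 + w.im * φ I := by
      rw [map_add, map_smul, map_smul, Complex.real_smul, Complex.real_smul]

theorem wirtinger_parts_of_eq (φ : ℂ →L[ℝ] ℂ) {D : ℂ → ℂ} {m a β : ℂ}
    (hD : ∀ t, D t = m * (a * t + φ (β * t))) :
    2⁻¹ * (D 1 - I * D I) = m * (a + β * (2⁻¹ * (φ 1 - I * φ I))) ∧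
      2⁻¹ * (D 1 + I * D I) = m * (conj β * (2⁻¹ * (φ 1 + I * φ I))) := by
  obtain ⟨r, s, rfl⟩ : ∃ r s : ℝ, β = r + s * I := ⟨β.re, β.im, (Complex.re_add_im β).symm⟩
  have h1 := clm_apply_eq_re_mul_add_im_mul φ (r + s * I)
  have hI := clm_apply_eq_re_mul_add_im_mul φ ((r + s * I) * I)
  simp only [Complex.add_re, Complex.add_im, Complex.mul_re, Complex.mul_im, Complex.ofReal_re,
    Complex.ofReal_im, Complex.I_re, Complex.I_im] at h1 hI
  simp only [hD, mul_one, h1, hI, map_add, map_mul, Complex.conj_ofReal, Complex.conj_I]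
  push_cast at *
  constructor
  · linear_combination 2⁻¹ * m * (s * φ I - a) * Complex.I_sq
  · linear_combination 2⁻¹ * m * (s * φ I + a) * Complex.I_sq

theorem denom_ne_zero_of_det_eq_one {M : Matrix (Fin 2) (Fin 2) ℝ} (hM : M.det = 1) {τ : ℂ}
    (hτ : 0 < τ.im) : ((M 1 0 : ℝ) : ℂ) * τ + ((M 1 1 : ℝ) : ℂ) ≠ 0 := by
  intro h
  have hre := congrArg Complex.re h
  have him := congrArg Complex.im h
  simp only [Complex.add_re, Complex.add_im, Complex.mul_re, Complex.mul_im, Complex.ofReal_re,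
    Complex.ofReal_im, Complex.zero_re, Complex.zero_im] at hre him
  have hc : M 1 0 = 0 := by nlinarith
  rw [Matrix.det_fin_two, hc] at hM
  simp_all

theorem im_mAct {M : Matrix (Fin 2) (Fin 2) ℝ} (hM : M.det = 1) (τ : ℂ) :
    (mAct M τ).im = τ.im * normSq (betaC M τ) := by
  rw [mAct, betaC, Complex.div_im, ← sub_div, div_eq_mul_inv, Complex.normSq_inv]
  congr 1
  rw [Matrix.det_fin_two] at hM
  simp only [Complex.add_re, Complex.add_im, Complex.mul_re, Complex.mul_im, Complex.ofReal_re,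
    Complex.ofReal_im]
  linear_combination τ.im * hM

section
variable {N : ℕ}

def shiftVec (g : JTriple N) (p : ℂ × (Fin N → ℂ)) : Fin N → ℂ :=
  p.2 + p.1 • col1 g.X + col2 g.X

/-- `X₁ − cβW` with `W = shiftVec g p`: the `z`-gradient of `a(g, ·)`, see `aFun_add_snd`. -/
def aGrad (g : JTriple N) (p : ℂ × (Fin N → ℂ)) : Fin N → ℂ :=
  col1 g.X - (((g.M 1 0 : ℝ) : ℂ) * betaC g.M p.1) • shiftVec g p

theorem jAct_add_snd (g : JTriple N) (p : ℂ × (Fin N → ℂ)) (w : Fin N → ℂ) :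
    jAct g (p + (0, w)) = jAct g p + (0, betaC g.M p.1 • w) := by
  ext i <;> simp [jAct]
  ring

theorem aFun_add_snd (g : JTriple N) (p : ℂ × (Fin N → ℂ)) (w : Fin N → ℂ) :
    aFun g (p + (0, w)) = aFun g p + (vecMulVec (aGrad g p) w + vecMulVec w (aGrad g p))
      - (((g.M 1 0 : ℝ) : ℂ) * betaC g.M p.1) • vecMulVec w w := by
  ext i l
  simp only [aFun, aGrad, shiftVec, Prod.fst_add, Prod.snd_add, add_zero, Matrix.add_apply,
    Matrix.sub_apply, Matrix.smul_apply, vecMulVec_apply, Pi.add_apply, Pi.sub_apply,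
    Pi.smul_apply, smul_eq_mul]
  ring

theorem trace_mul_aFun_add_snd (L : Matrix (Fin N) (Fin N) ℂ) (g : JTriple N)
    (p : ℂ × (Fin N → ℂ)) (w : Fin N → ℂ) :
    (L * aFun g (p + (0, w))).trace = (L * aFun g p).trace
      + ((L *ᵥ aGrad g p) ⬝ᵥ w + (L *ᵥ w) ⬝ᵥ aGrad g p)
      - ((g.M 1 0 : ℝ) : ℂ) * betaC g.M p.1 * ((L *ᵥ w) ⬝ᵥ w) := by
  simp only [aFun_add_snd, Matrix.mul_add, Matrix.mul_sub, Matrix.mul_smul, mul_vecMulVec,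
    trace_add, trace_sub, trace_smul, trace_vecMulVec, smul_eq_mul]

theorem yC_jAct {g : JTriple N} (hg : g.M.det = 1) (p : ℂ × (Fin N → ℂ)) :
    yC (jAct g p) = yC p * (betaC g.M p.1 * conj (betaC g.M p.1)) := by
  simp [yC, jAct, im_mAct hg, Complex.mul_conj]

theorem aGrad_add_inv_yC_smul_vC_coord (c d x₁ x₂ : ℝ) {τ : ℂ} (z : ℂ) (hτ : τ.im ≠ 0)
    (hD : (c : ℂ) * τ + d ≠ 0) :
    (x₁ : ℂ) - c * (c * τ + d)⁻¹ * (z + τ * x₁ + x₂) + (τ.im : ℂ)⁻¹ * (z.im : ℂ)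
      = (c * τ + d)⁻¹ * ((τ.im * normSq ((c * τ + d)⁻¹) : ℝ) : ℂ)⁻¹
          * (((c * τ + d)⁻¹ * (z + τ * x₁ + x₂)).im : ℂ) := by
  set D : ℂ := c * τ + d with hD_def
  set W : ℂ := z + τ * x₁ + x₂ with hW_def
  -- after clearing denominators the claim is this identity, whose imaginary part is `0 = 0`
  have key : (τ.im : ℂ) * D * x₁ - c * τ.im * W + z.im * D = ((W * conj D).im : ℂ) := by
    apply Complex.ext <;> simp [hD_def, hW_def] <;> ring
  have him : ((D⁻¹ * W).im : ℂ) = ((W * conj D).im : ℂ) / (D * conj D) := by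
    rw [Complex.inv_def, mul_comm, ← mul_assoc, Complex.im_mul_ofReal, Complex.mul_conj]
    push_cast
    ring
  have hc : conj D ≠ 0 := by simpa using hD
  have hy : (τ.im : ℂ) ≠ 0 := by exact_mod_cast hτ
  rw [him, Complex.ofReal_mul, Complex.normSq_inv, Complex.ofReal_inv, ← Complex.mul_conj, ← key]
  field_simp

theorem aGrad_add_inv_yC_smul_vC {g : JTriple N} (hg : g.M.det = 1)
    {p : ℂ × (Fin N → ℂ)} (hp : 0 < p.1.im) :
    aGrad g p + (yC p)⁻¹ • vC p = (betaC g.M p.1 * (yC (jAct g p))⁻¹) • vC (jAct g p) := by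
  funext l
  simp only [Pi.add_apply, Pi.smul_apply, smul_eq_mul, aGrad, Pi.sub_apply, shiftVec, yC, vC,
    jAct, im_mAct hg]
  exact aGrad_add_inv_yC_smul_vC_coord (g.M 1 0) (g.M 1 1) (g.X l 0) (g.X l 1) (p.2 l)
    hp.ne' (denom_ne_zero_of_det_eq_one hg hp)

theorem sum_Lfrak_mul_vC (L : Matrix (Fin N) (Fin N) ℂ) (j : Fin N) (p : ℂ × (Fin N → ℂ)) :
    ∑ l, Lfrak L j l * vC p l = 2 * Real.pi * I * (L *ᵥ vC p) j := by
  simp only [Lfrak, Matrix.smul_apply, smul_eq_mul, mulVec, dotProduct, Finset.mul_sum, mul_assoc]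

theorem hasLineDerivAt_trace_mul_aFun (L : Matrix (Fin N) (Fin N) ℂ) (g : JTriple N)
    (p : ℂ × (Fin N → ℂ)) (w : Fin N → ℂ) :
    HasLineDerivAt ℝ (fun q => (L * aFun g q).trace)
      ((L *ᵥ aGrad g p) ⬝ᵥ w + (L *ᵥ w) ⬝ᵥ aGrad g p) p (0, w) := by
  set A := (L *ᵥ aGrad g p) ⬝ᵥ w + (L *ᵥ w) ⬝ᵥ aGrad g p
  set C := ((g.M 1 0 : ℝ) : ℂ) * betaC g.M p.1 * ((L *ᵥ w) ⬝ᵥ w)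
  have hquad : HasDerivAt (fun ζ : ℂ => (L * aFun g p).trace + ζ * A - ζ ^ 2 * C) A 0 := by
    simpa using (((hasDerivAt_id (0 : ℂ)).mul_const A).const_add _).fun_sub
      ((hasDerivAt_pow 2 (0 : ℂ)).mul_const C)
  refine (hquad.comp_ofReal (z := 0)).congr_of_eventuallyEq
    (Filter.Eventually.of_forall fun t => ?_)
  dsimp only
  rw [Prod.smul_mk, smul_zero, trace_mul_aFun_add_snd]
  simp only [A, C, mulVec_smul, dotProduct_smul, smul_dotProduct, Complex.real_smul]
  ring

theorem hasLineDerivAt_alphaL (L : Matrix (Fin N) (Fin N) ℂ) (g : JTriple N)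
    (p : ℂ × (Fin N → ℂ)) (w : Fin N → ℂ) :
    HasLineDerivAt ℝ (alphaL L g) (alphaL L g p *
      (2 * Real.pi * I * ((L *ᵥ aGrad g p) ⬝ᵥ w + (L *ᵥ w) ⬝ᵥ aGrad g p))) p (0, w) := by
  have := ((hasLineDerivAt_trace_mul_aFun L g p w).const_mul (2 * Real.pi * I : ℂ)).cexp
  unfold HasLineDerivAt at this ⊢
  simpa [alphaL, mul_comm] using this

variable {k : ℤ} {L : Matrix (Fin N) (Fin N) ℂ} {g : JTriple N} {f : ℂ × (Fin N → ℂ) → ℂ}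
  {p : ℂ × (Fin N → ℂ)}

theorem differentiableAt_jSlash (hf : DifferentiableAt ℝ f (jAct g p))
    (hD : ((g.M 1 0 : ℝ) : ℂ) * p.1 + ((g.M 1 1 : ℝ) : ℂ) ≠ 0) :
    DifferentiableAt ℝ (jSlash k L f g) p := by
  have hβ : DifferentiableAt ℝ (fun q : ℂ × (Fin N → ℂ) => betaC g.M q.1) p := by
    unfold betaC
    fun_prop (disch := exact hD)
  have hβk : DifferentiableAt ℝ (fun q : ℂ × (Fin N → ℂ) => betaC g.M q.1 ^ k) p := by
    fun_prop (disch := exact Or.inl (inv_ne_zero hD))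
  have hjAct : DifferentiableAt ℝ (jAct g) p := by
    have hmAct : DifferentiableAt ℝ (fun q : ℂ × (Fin N → ℂ) => mAct g.M q.1) p := by
      simp only [mAct, div_eq_mul_inv]
      fun_prop (disch := exact hD)
    unfold jAct
    fun_prop
  have htrace : DifferentiableAt ℝ (fun q => (L * aFun g q).trace) p := by
    simp only [Matrix.trace, Matrix.diag, Matrix.mul_apply, aFun, Matrix.add_apply,
      Matrix.sub_apply, Matrix.smul_apply, vecMulVec_apply, Matrix.map_apply, Pi.add_apply,
      Pi.smul_apply, smul_eq_mul]
    fun_prop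
  have hfjAct := hf.comp p hjAct
  unfold jSlash alphaL
  fun_prop

theorem hasLineDerivAt_jSlash (hf : DifferentiableAt ℝ f (jAct g p)) (w : Fin N → ℂ) :
    HasLineDerivAt ℝ (jSlash k L f g) (betaC g.M p.1 ^ k *
      (alphaL L g p * (2 * Real.pi * I * ((L *ᵥ aGrad g p) ⬝ᵥ w + (L *ᵥ w) ⬝ᵥ aGrad g p))
          * f (jAct g p)
        + alphaL L g p * fderiv ℝ f (jAct g p) (0, betaC g.M p.1 • w))) p (0, w) := by
  have hα := hasLineDerivAt_alphaL L g p w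
  have hf' := hf.hasFDerivAt.hasLineDerivAt (0, betaC g.M p.1 • w)
  unfold HasLineDerivAt at *
  refine (((hα.mul hf').const_mul (betaC g.M p.1 ^ k)).congr_deriv (by simp)).congr_of_eventuallyEq
    (Filter.Eventually.of_forall fun t => ?_)
  simp only [jSlash, Prod.smul_mk, smul_zero, jAct_add_snd, Prod.fst_add, add_zero,
    mul_assoc, Pi.mul_apply]
  rw [smul_comm]

def partialZ (f : ℂ × (Fin N → ℂ) → ℂ) (q : ℂ × (Fin N → ℂ)) (j : Fin N) : ℂ →L[ℝ] ℂ :=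
  (fderiv ℝ f q).comp
    ((ContinuousLinearMap.inr ℝ ℂ (Fin N → ℂ)).comp (ContinuousLinearMap.single ℝ (fun _ => ℂ) j))

theorem partialZ_apply (f : ℂ × (Fin N → ℂ) → ℂ) (q : ℂ × (Fin N → ℂ)) (j : Fin N) (t : ℂ) :
    partialZ f q j t = fderiv ℝ f q (0, Pi.single j t) := rfl

theorem dZ_eq_partialZ (f : ℂ × (Fin N → ℂ) → ℂ) (q : ℂ × (Fin N → ℂ)) (j : Fin N) :
    dZ j f q = 2⁻¹ * (partialZ f q j 1 - I * partialZ f q j I) := rfl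

theorem dZBar_eq_partialZ (f : ℂ × (Fin N → ℂ) → ℂ) (q : ℂ × (Fin N → ℂ)) (j : Fin N) :
    dZBar j f q = 2⁻¹ * (partialZ f q j 1 + I * partialZ f q j I) := rfl

theorem partialZ_jSlash (hf : DifferentiableAt ℝ f (jAct g p))
    (hD : ((g.M 1 0 : ℝ) : ℂ) * p.1 + ((g.M 1 1 : ℝ) : ℂ) ≠ 0) (j : Fin N) (t : ℂ) :
    partialZ (jSlash k L f g) p j t = betaC g.M p.1 ^ k * alphaL L g p *
      (2 * Real.pi * I * ((L *ᵥ aGrad g p) j + (Lᵀ *ᵥ aGrad g p) j) * f (jAct g p) * t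
        + partialZ f (jAct g p) j (betaC g.M p.1 * t)) := by
  have hsingle : (L *ᵥ Pi.single j t) ⬝ᵥ aGrad g p = (Lᵀ *ᵥ aGrad g p) j * t := by
    rw [dotProduct_comm, dotProduct_mulVec, ← mulVec_transpose, dotProduct_single]
  rw [partialZ_apply, partialZ_apply,
    ((differentiableAt_jSlash hf hD).hasFDerivAt.hasLineDerivAt _).unique
      (hasLineDerivAt_jSlash hf _), hsingle, dotProduct_single, ← Pi.single_smul', smul_eq_mul]
  ring

theorem dZ_jSlash (hL : L.IsSymm) (hf : DifferentiableAt ℝ f (jAct g p))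
    (hD : ((g.M 1 0 : ℝ) : ℂ) * p.1 + ((g.M 1 1 : ℝ) : ℂ) ≠ 0) (j : Fin N) :
    dZ j (jSlash k L f g) p = betaC g.M p.1 ^ k * alphaL L g p *
      (2 * Real.pi * I * (2 * (L *ᵥ aGrad g p) j) * f (jAct g p)
        + betaC g.M p.1 * dZ j f (jAct g p)) := by
  have h := (wirtinger_parts_of_eq _ (partialZ_jSlash (k := k) (L := L) hf hD j)).1
  rw [hL.eq, ← two_mul] at h
  rwa [dZ_eq_partialZ, dZ_eq_partialZ]

theorem dZBar_jSlash (hf : DifferentiableAt ℝ f (jAct g p))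
    (hD : ((g.M 1 0 : ℝ) : ℂ) * p.1 + ((g.M 1 1 : ℝ) : ℂ) ≠ 0) (j : Fin N) :
    dZBar j (jSlash k L f g) p = betaC g.M p.1 ^ k * alphaL L g p *
      (conj (betaC g.M p.1) * dZBar j f (jAct g p)) := by
  rw [dZBar_eq_partialZ, dZBar_eq_partialZ]
  exact (wirtinger_parts_of_eq _ (partialZ_jSlash hf hD j)).2

end

theorem opY_covariant_general (N : ℕ) (k : ℤ) (L : Matrix (Fin N) (Fin N) ℂ)
    (hL : L.IsSymm) (g : JTriple N) (hg : g.IsMem)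
    (f : ℂ × (Fin N → ℂ) → ℂ) (hf : ContDiff ℝ (⊤ : ℕ∞) f)
    (p : ℂ × (Fin N → ℂ)) (hp : 0 < p.1.im) (j : Fin N) :
    opYp L j (jSlash k L f g) p = jSlash (k + 1) L (opYp L j f) g p ∧
    opYm j (jSlash k L f g) p = jSlash (k - 1) L (opYm j f) g p := by
  have hD := denom_ne_zero_of_det_eq_one hg.1 hp
  have hβ : betaC g.M p.1 ≠ 0 := inv_ne_zero hD
  have hfd : DifferentiableAt ℝ f (jAct g p) := hf.differentiable (by simp) _
  constructor
  · have hv := congrFun (congrArg (L *ᵥ ·) (aGrad_add_inv_yC_smul_vC hg.1 hp)) j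
    simp only [mulVec_add, mulVec_smul, Pi.add_apply, Pi.smul_apply, smul_eq_mul] at hv
    simp only [opYp, jSlash, sum_Lfrak_mul_vC, dZ_jSlash hL hfd hD, zpow_add_one₀ hβ]
    linear_combination
      (betaC g.M p.1 ^ k * alphaL L g p * (2 * I) * (2 * Real.pi * I) * f (jAct g p)) * hv
  · have hk : betaC g.M p.1 ^ k = betaC g.M p.1 ^ (k - 1) * betaC g.M p.1 := by
      rw [← zpow_add_one₀ hβ, sub_add_cancel]
    simp only [opYm, jSlash, dZBar_jSlash hfd hD, yC_jAct hg.1, hk]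
    ring

/-- The vector operators `Y₊` and `Y₋` are componentwise covariant of order 1:
`Y₊,ⱼ(f|_{k,L}[g]) = (Y₊,ⱼ f)|_{k+1,L}[g]` and `Y₋,ⱼ(f|_{k,L}[g]) = (Y₋,ⱼ f)|_{k-1,L}[g]`. -/
theorem opY_covariant (N : ℕ) (hN : 1 ≤ N) (k : ℤ) (L : Matrix (Fin N) (Fin N) ℂ)
    (hL : L.IsSymm) (g : JTriple N) (hg : g.IsMem)
    (f : ℂ × (Fin N → ℂ) → ℂ) (hf : ContDiff ℝ (⊤ : ℕ∞) f)
    (p : ℂ × (Fin N → ℂ)) (hp : 0 < p.1.im) (j : Fin N) :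
    opYp L j (jSlash k L f g) p = jSlash (k + 1) L (opYp L j f) g p ∧
    opYm j (jSlash k L f g) p = jSlash (k - 1) L (opYm j f) g p :=
  opY_covariant_general N k L hL g hg f hf p hp j
end
end

section
/- In the multivariate polynomial ring ℂ[e₁,…,e_N, f₁,…,f_N, Z_{ij} (1 ≤ i ≤ j ≤ N)], let Z denote the symmetric N×N matrix of variables (Z_{ji} := Z_{ij}), let adj(Z) be its adjugate matrix, and let e, f be the column vectors of the e- and f-variables. Then det(Z) divides the polynomial (eᵀ·adj(Z)·f)² − (eᵀ·adj(Z)·e)·(fᵀ·adj(Z)·f). Equivalently, det(Z)·( eᵀ(eᵀZ^{-1}f)Z^{-1}f − (eᵀZ^{-1}e)(fᵀZ^{-1}f) ) is a polynomial of degree N+2. -/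
open Matrix MvPolynomial

noncomputable section

/-- Variables: `e₁,…,e_N`, `f₁,…,f_N`, and `Z_{ij}` for pairs `(i,j)`. -/
abbrev JVar (N : ℕ) := Fin N ⊕ (Fin N ⊕ (Fin N × Fin N))

/-- The vector of variables `e`. -/
def eVec (N : ℕ) : Fin N → MvPolynomial (JVar N) ℂ := fun i => X (Sum.inl i)

/-- The vector of variables `f`. -/
def fVec (N : ℕ) : Fin N → MvPolynomial (JVar N) ℂ := fun i => X (Sum.inr (Sum.inl i))

/-- The symmetric matrix of variables `Z` (with `Z_{ji} = Z_{ij}` for `i ≤ j`). -/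
def Zmat (N : ℕ) : Matrix (Fin N) (Fin N) (MvPolynomial (JVar N) ℂ) :=
  Matrix.of fun i j => if i ≤ j then X (Sum.inr (Sum.inr (i, j))) else X (Sum.inr (Sum.inr (j, i)))

/-!
For `d = det A`, `b = eᵀ adj(A) f`, `b' = fᵀ adj(A) e`, `a = eᵀ adj(A) e`, `c = fᵀ adj(A) f`,
the matrix determinant lemma applied to the rank-two update `A + e fᵀ + f eᵀ` gives, over the
fraction field, `d · det (A + e fᵀ + f eᵀ) = d² + d (b + b') + (b b' - a c)`. All other terms
lie in the ring, so `d ∣ b b' - a c`. For the generic symmetric matrix `Z`, `det Z ≠ 0` since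
`Z` specializes to the identity, and `b = b'` since `adj Z` is symmetric.
-/

namespace Matrix

variable {n : Type*} [Fintype n]

theorem of_mul_mul_transpose_of_apply {R k : Type*} [CommSemiring R] (v w : k → n → R)
    (B : Matrix n n R) (i j : k) :
    (of v * B * (of w)ᵀ) i j = v i ⬝ᵥ B *ᵥ w j := by
  rw [dotProduct_mulVec]
  rfl

variable [DecidableEq n]

theorem det_mul_det_add_vecMulVec_add_vecMulVec {K : Type*} [Field K] (A : Matrix n n K)
    (hA : A.det ≠ 0) (e f : n → K) :
    A.det * (A + vecMulVec e f + vecMulVec f e).det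
      = A.det ^ 2 + A.det * (e ⬝ᵥ A.adjugate *ᵥ f + f ⬝ᵥ A.adjugate *ᵥ e)
        + ((e ⬝ᵥ A.adjugate *ᵥ f) * (f ⬝ᵥ A.adjugate *ᵥ e)
          - (e ⬝ᵥ A.adjugate *ᵥ e) * (f ⬝ᵥ A.adjugate *ᵥ f)) := by
  have h_rank_two : vecMulVec e f + vecMulVec f e = (of ![e, f])ᵀ * of ![f, e] := by
    ext i j
    simp [vecMulVec_apply, mul_apply, Fin.sum_univ_two]
  rw [add_assoc, h_rank_two, det_add_mul _ _ (isUnit_iff_ne_zero.mpr hA), inv_def,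
    Ring.inverse_eq_inv', det_fin_two]
  simp only [add_apply, one_apply_eq, one_apply_ne zero_ne_one, one_apply_ne one_ne_zero,
    Matrix.mul_smul, Matrix.smul_mul, smul_apply, of_mul_mul_transpose_of_apply, smul_eq_mul,
    cons_val_zero, cons_val_one, zero_add]
  field_simp
  ring

theorem det_mul_det_add_vecMulVec_add_vecMulVec_of_isDomain {R : Type*} [CommRing R] [IsDomain R]
    (A : Matrix n n R) (hA : A.det ≠ 0) (e f : n → R) :
    A.det * (A + vecMulVec e f + vecMulVec f e).det
      = A.det ^ 2 + A.det * (e ⬝ᵥ A.adjugate *ᵥ f + f ⬝ᵥ A.adjugate *ᵥ e)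
        + ((e ⬝ᵥ A.adjugate *ᵥ f) * (f ⬝ᵥ A.adjugate *ᵥ e)
          - (e ⬝ᵥ A.adjugate *ᵥ e) * (f ⬝ᵥ A.adjugate *ᵥ f)) := by
  let φ := algebraMap R (FractionRing R)
  have hφ : Function.Injective φ := IsFractionRing.injective R (FractionRing R)
  apply hφ
  have h_det : ∀ B : Matrix n n R, φ B.det = (B.map φ).det := fun B => φ.map_det B
  have h_form : ∀ v w : n → R,
      φ (v ⬝ᵥ A.adjugate *ᵥ w) = (φ ∘ v) ⬝ᵥ (A.map φ).adjugate *ᵥ (φ ∘ w) := by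
    intro v w
    rw [← RingHom.mapMatrix_apply, ← φ.map_adjugate, φ.map_dotProduct]
    congr 1
    ext i
    exact φ.map_mulVec _ _ i
  have h_map : (A + vecMulVec e f + vecMulVec f e).map φ
      = A.map φ + vecMulVec (φ ∘ e) (φ ∘ f) + vecMulVec (φ ∘ f) (φ ∘ e) := by
    ext i j
    simp [vecMulVec_apply]
  simp only [map_add, map_mul, map_sub, map_pow, h_det, h_form, h_map]
  exact det_mul_det_add_vecMulVec_add_vecMulVec _ (by rwa [← h_det, map_ne_zero_iff φ hφ]) _ _

theorem det_dvd_dotProduct_adjugate_mulVec_sub {R : Type*} [CommRing R] [IsDomain R]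
    (A : Matrix n n R) (hA : A.det ≠ 0) (e f : n → R) :
    A.det ∣ (e ⬝ᵥ A.adjugate *ᵥ f) * (f ⬝ᵥ A.adjugate *ᵥ e)
      - (e ⬝ᵥ A.adjugate *ᵥ e) * (f ⬝ᵥ A.adjugate *ᵥ f) :=
  ⟨(A + vecMulVec e f + vecMulVec f e).det - A.det
      - (e ⬝ᵥ A.adjugate *ᵥ f + f ⬝ᵥ A.adjugate *ᵥ e), by
    linear_combination -det_mul_det_add_vecMulVec_add_vecMulVec_of_isDomain A hA e f⟩

theorem IsSymm.dotProduct_adjugate_mulVec_comm {R : Type*} [CommRing R] {A : Matrix n n R}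
    (hA : A.IsSymm) (e f : n → R) :
    f ⬝ᵥ A.adjugate *ᵥ e = e ⬝ᵥ A.adjugate *ᵥ f := by
  rw [← hA.adjugate.eq, dotProduct_transpose_mulVec, hA.adjugate.eq]

end Matrix

theorem Zmat_isSymm (N : ℕ) : (Zmat N).IsSymm := by
  ext i j
  rcases lt_trichotomy i j with h | rfl | h
  · simp [Zmat, h.le, not_le.mpr h]
  · rfl
  · simp [Zmat, h.le, not_le.mpr h]

theorem Zmat_map_eval_eq_one (N : ℕ) :
    (eval (Sum.elim 0 (Sum.elim 0 fun p => (1 : Matrix (Fin N) (Fin N) ℂ) p.1 p.2))).mapMatrix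
      (Zmat N) = 1 := by
  ext i j
  by_cases h : i ≤ j <;> simp [Zmat, h, one_apply, eq_comm]

theorem det_Zmat_ne_zero (N : ℕ) : (Zmat N).det ≠ 0 := by
  have h_eval := congrArg det (Zmat_map_eval_eq_one N)
  rw [← RingHom.map_det, det_one] at h_eval
  exact fun h => by simp [h] at h_eval

/-- `det(Z)` divides `(eᵀ·adj(Z)·f)² − (eᵀ·adj(Z)·e)·(fᵀ·adj(Z)·f)` in the polynomial ring;
equivalently, `det(Z)·(eᵀ(eᵀZ⁻¹f)Z⁻¹f − (eᵀZ⁻¹e)(fᵀZ⁻¹f))` is a polynomial. -/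
theorem det_dvd_adjugate_quadratic (N : ℕ) :
    (Zmat N).det ∣
      (∑ i, ∑ j, eVec N i * (Zmat N).adjugate i j * fVec N j) ^ 2
        - (∑ i, ∑ j, eVec N i * (Zmat N).adjugate i j * eVec N j)
          * (∑ i, ∑ j, fVec N i * (Zmat N).adjugate i j * fVec N j) := by
  have h_form : ∀ v w : Fin N → MvPolynomial (JVar N) ℂ,
      ∑ i, ∑ j, v i * (Zmat N).adjugate i j * w j = v ⬝ᵥ (Zmat N).adjugate *ᵥ w :=
    fun v w => (toBilin'_apply _ v w).symm.trans (toBilin'_apply' _ v w)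
  rw [h_form, h_form, h_form, sq]
  have h_dvd :=
    det_dvd_dotProduct_adjugate_mulVec_sub (Zmat N) (det_Zmat_ne_zero N) (eVec N) (fVec N)
  rw [(Zmat_isSymm N).dotProduct_adjugate_mulVec_comm (eVec N) (fVec N)] at h_dvd
  exact h_dvd
end
end
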